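/- arXiv:2006.10693 — 8 statements merged into one kernel-verified Lean document; each statement's English description precedes it below -/
import Mathlib

section
/- Barbalat's lemma: if W : [0,∞) → ℝ is uniformly continuous and the limit as t → ∞ of ∫₀ᵗ W(τ) dτ exists and is finite, then W(t) → 0 as t → ∞. -/
open MeasureTheory

/-- Barbalat's lemma: if `W : [0,∞) → ℝ` is uniformly continuous, locally integrable,
and `∫₀ᵗ W` converges to a finite limit as `t → ∞`, then `W(t) → 0` as `t → ∞`. -/
theorem barbalat
    (W : ℝ → ℝ) (I : ℝ)
    (hunif : UniformContinuousOn W (Set.Ici 0))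
    (hint : ∀ T : ℝ, IntegrableOn W (Set.Icc 0 T))
    (hlim : Filter.Tendsto (fun t => ∫ τ in (0:ℝ)..t, W τ) Filter.atTop (nhds I)) :
    Filter.Tendsto W Filter.atTop (nhds 0) := by
  by_contra hcon
  rw [Metric.tendsto_atTop] at hcon
  push_neg at hcon
  obtain ⟨ε, hε, hfreq⟩ := hcon
  obtain ⟨δ, hδ, hδ'⟩ := Metric.uniformContinuousOn_iff.mp hunif (ε/2) (by positivity)
  set d := δ/2 with hd
  have hdpos : 0 < d := by positivity
  obtain ⟨N, hN⟩ := Metric.tendsto_atTop.mp hlim (ε*d/4) (by positivity)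
  obtain ⟨t, ht, htW⟩ := hfreq (max N 0)
  have ht0 : (0:ℝ) ≤ t := le_trans (le_max_right N 0) ht
  have htN : N ≤ t := le_trans (le_max_left N 0) ht
  rw [Real.dist_eq, sub_zero] at htW
  have hii : ∀ a b : ℝ, 0 ≤ a → a ≤ b → IntervalIntegrable W volume a b := by
    intro a b ha hab
    rw [intervalIntegrable_iff_integrableOn_Icc_of_le hab]
    exact (hint b).mono_set (Set.Icc_subset_Icc ha le_rfl)
  have h1 : IntervalIntegrable W volume 0 t := hii 0 t le_rfl ht0
  have h2 : IntervalIntegrable W volume 0 (t+d) := hii 0 (t+d) le_rfl (by linarith)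
  have h3 : IntervalIntegrable W volume t (t+d) := hii t (t+d) ht0 (by linarith)
  have hsub : (∫ τ in (0:ℝ)..(t+d), W τ) - (∫ τ in (0:ℝ)..t, W τ) = ∫ τ in t..(t+d), W τ :=
    intervalIntegral.integral_interval_sub_left h2 h1
  have hclose : |∫ τ in t..(t+d), W τ| < ε*d/2 := by
    have hA := hN t htN
    have hB := hN (t+d) (by linarith)
    rw [Real.dist_eq] at hA hB
    rw [← hsub]
    calc |(∫ τ in (0:ℝ)..(t+d), W τ) - (∫ τ in (0:ℝ)..t, W τ)|
        ≤ |(∫ τ in (0:ℝ)..(t+d), W τ) - I| + |I - (∫ τ in (0:ℝ)..t, W τ)| :=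
          abs_sub_le _ _ _
      _ < ε*d/2 := by rw [abs_sub_comm I]; linarith
  have hnear : ∀ s ∈ Set.Icc t (t+d), |W s - W t| < ε/2 := by
    intro s hs
    have hs0 : (0:ℝ) ≤ s := le_trans ht0 hs.1
    have hdist : dist s t < δ := by
      rw [Real.dist_eq, abs_of_nonneg (by linarith [hs.1])]
      have := hs.2
      have : s - t ≤ d := by linarith
      linarith
    have := hδ' s (Set.mem_Ici.mpr hs0) t (Set.mem_Ici.mpr ht0) hdist
    rwa [Real.dist_eq] at this
  rcases le_abs.mp htW with hpos | hneg
  · have hlow : ∀ s ∈ Set.Icc t (t+d), (fun _ : ℝ => ε/2) s ≤ W s := by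
      intro s hs
      have := abs_lt.mp (hnear s hs)
      simp only
      linarith [this.1]
    have hmono := intervalIntegral.integral_mono_on (by linarith : t ≤ t+d)
      intervalIntegrable_const h3 hlow
    rw [intervalIntegral.integral_const, smul_eq_mul, show t+d-t = d by ring] at hmono
    have := le_abs_self (∫ τ in t..(t+d), W τ)
    nlinarith
  · have hhigh : ∀ s ∈ Set.Icc t (t+d), W s ≤ (fun _ : ℝ => -(ε/2)) s := by
      intro s hs
      have := abs_lt.mp (hnear s hs)
      simp only
      linarith [this.2]
    have hmono := intervalIntegral.integral_mono_on (by linarith : t ≤ t+d)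
      h3 intervalIntegrable_const hhigh
    rw [intervalIntegral.integral_const, smul_eq_mul, show t+d-t = d by ring] at hmono
    have := neg_abs_le (∫ τ in t..(t+d), W τ)
    nlinarith
end

section
/- Let y : [0,∞) → ℝⁿ be absolutely continuous (in particular differentiable almost everywhere) and suppose there are constants a > 0 and b ≥ 0 such that ⟨y'(t), y(t)⟩ ≤ -a‖y(t)‖² + b‖y(t)‖ for almost every t ≥ 0. Then limsup_{t→∞} ‖y(t)‖ ≤ b/a. -/
/-!
Where `‖y‖ > c := b/a + ε`, the derivative `2⟪y', y⟫` of `‖y‖²` is at most `-2aεc`. Since `‖y‖²`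
is absolutely continuous, it is the integral of its derivative, so it decreases at a linear rate
while it stays above `c²`: being nonnegative, it drops below `c²` in finite time, and it can never
climb back above that level afterwards.
-/

open MeasureTheory Set Filter

theorem AbsolutelyContinuousOnInterval.of_dist_le_mul {X Y : Type*} [PseudoMetricSpace X]
    [PseudoMetricSpace Y] {f : ℝ → X} {g : ℝ → Y} {a b C : ℝ}
    (hg : AbsolutelyContinuousOnInterval g a b)
    (hfg : ∀ u ∈ uIcc a b, ∀ v ∈ uIcc a b, dist (f u) (f v) ≤ C * dist (g u) (g v)) :
    AbsolutelyContinuousOnInterval f a b := by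
  unfold AbsolutelyContinuousOnInterval at hg ⊢
  refine squeeze_zero' (.of_forall fun _ => Finset.sum_nonneg fun _ _ => dist_nonneg) ?_
    (by simpa using hg.const_mul C)
  rw [eventually_inf_principal]
  filter_upwards with ⟨n, I⟩ hnI
  rw [Finset.mul_sum]
  exact Finset.sum_le_sum fun i hi => hfg _ (hnI.1 i hi).1 _ (hnI.1 i hi).2

theorem AbsolutelyContinuousOnInterval.norm_sq {E : Type*} [SeminormedAddCommGroup E]
    {f : ℝ → E} {a b : ℝ} (hf : AbsolutelyContinuousOnInterval f a b) :
    AbsolutelyContinuousOnInterval (fun x => ‖f x‖ ^ 2) a b := by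
  obtain ⟨C, hC⟩ := hf.exists_bound
  refine hf.of_dist_le_mul (C := 2 * C) fun u hu v hv => ?_
  rw [Real.dist_eq, dist_eq_norm, sq_sub_sq, abs_mul, abs_of_nonneg (by positivity)]
  exact mul_le_mul (by linarith [hC u hu, hC v hv]) (abs_norm_sub_norm_le _ _) (abs_nonneg _)
    (by linarith [norm_nonneg (f u), hC u hu])

theorem IntervalIntegrable.absolutelyContinuousOnInterval_primitive {F : Type*}
    [NormedAddCommGroup F] [NormedSpace ℝ F] {f : ℝ → F} {a b c : ℝ}
    (h : IntervalIntegrable f volume a b) (hc : c ∈ uIcc a b) :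
    AbsolutelyContinuousOnInterval (fun x => ∫ v in c..x, f v) a b := by
  refine (h.norm.absolutelyContinuousOnInterval_intervalIntegral hc).of_dist_le_mul (C := 1)
    fun u hu v hv => ?_
  have hcu := h.mono_set (uIcc_subset_uIcc hc hu)
  have hcv := h.mono_set (uIcc_subset_uIcc hc hv)
  rw [one_mul, dist_eq_norm, Real.dist_eq, intervalIntegral.integral_interval_sub_left hcu hcv,
    intervalIntegral.integral_interval_sub_left hcu.norm hcv.norm]
  exact intervalIntegral.norm_integral_le_abs_integral_norm

theorem absolutelyContinuousOnInterval_of_eq_add_intervalIntegral {F : Type*}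
    [NormedAddCommGroup F] [NormedSpace ℝ F] {f f' : ℝ → F} {a b : ℝ}
    (hf' : IntervalIntegrable f' volume a b)
    (hf : ∀ x ∈ uIcc a b, f x = f a + ∫ v in a..x, f' v) :
    AbsolutelyContinuousOnInterval f a b :=
  (hf'.absolutelyContinuousOnInterval_primitive left_mem_uIcc).of_dist_le_mul (C := 1)
    fun u hu v hv => by rw [hf u hu, hf v hv, dist_add_left, one_mul]

theorem AbsolutelyContinuousOnInterval.sub_le_mul_of_ae_deriv_le {f : ℝ → ℝ} {a b C : ℝ}
    (hab : a ≤ b) (hf : AbsolutelyContinuousOnInterval f a b)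
    (hf' : ∀ᵐ x, x ∈ Ioo a b → deriv f x ≤ C) :
    f b - f a ≤ C * (b - a) := by
  have hle : deriv f ≤ᵐ[volume.restrict (Icc a b)] fun _ => C := by
    rw [Measure.restrict_congr_set Ioo_ae_eq_Icc.symm]
    exact (ae_restrict_iff' measurableSet_Ioo).2 hf'
  calc f b - f a = ∫ x in a..b, deriv f x := hf.integral_deriv_eq_sub.symm
    _ ≤ ∫ _ in a..b, C :=
      intervalIntegral.integral_mono_ae_restrict hab hf.intervalIntegrable_deriv
        intervalIntegrable_const hle
    _ = C * (b - a) := by rw [intervalIntegral.integral_const, smul_eq_mul, mul_comm]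

section Trapping

variable {N : ℝ → ℝ} {c δ : ℝ}

theorem sub_le_neg_mul_of_lt_on_Ioo (hN : ∀ t, 0 ≤ t → AbsolutelyContinuousOnInterval N 0 t)
    (hN' : ∀ᵐ t, 0 < t → c < N t → deriv N t ≤ -δ) {s t : ℝ} (hs : 0 ≤ s) (hst : s ≤ t)
    (hlt : ∀ τ ∈ Ioo s t, c < N τ) :
    N t - N s ≤ -δ * (t - s) :=
  ((hN t (hs.trans hst)).mono (uIcc_subset_uIcc (by simp [hs, hst, hs.trans hst]) right_mem_uIcc)
    |>.sub_le_mul_of_ae_deriv_le hst (hN'.mono fun τ h hτ => h (hs.trans_lt hτ.1) (hlt τ hτ)))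

theorem exists_nonneg_le_of_ae_deriv_le_neg (hδ : 0 < δ) (hN0 : ∀ t, 0 ≤ N t)
    (hN : ∀ t, 0 ≤ t → AbsolutelyContinuousOnInterval N 0 t)
    (hN' : ∀ᵐ t, 0 < t → c < N t → deriv N t ≤ -δ) :
    ∃ t₀, 0 ≤ t₀ ∧ N t₀ ≤ c := by
  by_contra! hlt
  set T := (N 0 + 1) / δ
  have hT : 0 ≤ T := by have := hN0 0; positivity
  have hδT : δ * T = N 0 + 1 := mul_div_cancel₀ _ hδ.ne'
  have := sub_le_neg_mul_of_lt_on_Ioo hN hN' le_rfl hT fun τ hτ => hlt τ hτ.1.le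
  linarith [hN0 T]

theorem le_of_le_of_ae_deriv_le_neg (hδ : 0 ≤ δ)
    (hN : ∀ t, 0 ≤ t → AbsolutelyContinuousOnInterval N 0 t)
    (hN' : ∀ᵐ t, 0 < t → c < N t → deriv N t ≤ -δ) {t₀ t : ℝ} (ht₀ : 0 ≤ t₀)
    (hNt₀ : N t₀ ≤ c) (ht : t₀ ≤ t) :
    N t ≤ c := by
  -- the last time in `[t₀, t]` at which `N ≤ c`
  set S := Icc t₀ t ∩ N ⁻¹' Iic c
  have hS : IsClosed S :=
    ((hN t (ht₀.trans ht)).continuousOn.mono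
      (by simp [uIcc_of_le (ht₀.trans ht), Icc_subset_Icc_left ht₀]))
      |>.preimage_isClosed_of_isClosed isClosed_Icc isClosed_Iic
  have hSbdd : BddAbove S := ⟨t, fun τ hτ => hτ.1.2⟩
  have hσ : sSup S ∈ S := hS.csSup_mem ⟨t₀, ⟨le_rfl, ht⟩, hNt₀⟩ hSbdd
  have hNσ : N (sSup S) ≤ c := hσ.2
  have hlt : ∀ τ ∈ Ioo (sSup S) t, c < N τ := fun τ hτ =>
    not_le.1 fun h => hτ.1.not_ge (le_csSup hSbdd ⟨⟨hσ.1.1.trans hτ.1.le, hτ.2.le⟩, h⟩)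
  have := sub_le_neg_mul_of_lt_on_Ioo hN hN' (ht₀.trans hσ.1.1) hσ.1.2 hlt
  nlinarith [mul_nonneg hδ (sub_nonneg.2 hσ.1.2)]

theorem eventually_le_of_ae_deriv_le_neg (hδ : 0 < δ) (hN0 : ∀ t, 0 ≤ N t)
    (hN : ∀ t, 0 ≤ t → AbsolutelyContinuousOnInterval N 0 t)
    (hN' : ∀ᵐ t, 0 < t → c < N t → deriv N t ≤ -δ) :
    ∀ᶠ t in atTop, N t ≤ c := by
  obtain ⟨t₀, ht₀, hNt₀⟩ := exists_nonneg_le_of_ae_deriv_le_neg hδ hN0 hN hN'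
  exact eventually_atTop.2 ⟨t₀, fun t ht => le_of_le_of_ae_deriv_le_neg hδ.le hN hN' ht₀ hNt₀ ht⟩

end Trapping

theorem neg_mul_sq_add_mul_le {a b ε r : ℝ} (ha : 0 < a) (hb : 0 ≤ b) (hε : 0 < ε)
    (hr : b / a + ε < r) :
    -a * r ^ 2 + b * r ≤ -(a * ε * (b / a + ε)) := by
  set c := b / a + ε
  have hgap : a * c - b = a * ε := by rw [mul_add, mul_div_cancel₀ _ ha.ne']; ring
  have hc : 0 ≤ c := by positivity
  -- `-a r² + b r = -c (a c - b) - (r - c) (a (r + c) - b)`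
  have : 0 ≤ (r - c) * (a * (r + c) - b) := by
    apply mul_nonneg <;> nlinarith
  nlinarith

theorem limsup_norm_le_of_ae_inner_deriv_bound_general
    {n : ℕ} (y y' : ℝ → EuclideanSpace ℝ (Fin n)) (a b : ℝ)
    (ha : 0 < a) (hb : 0 ≤ b)
    (hint : ∀ T : ℝ, IntegrableOn y' (Set.Icc 0 T))
    (hftc : ∀ t ∈ Set.Ici (0:ℝ), y t = y 0 + ∫ τ in (0:ℝ)..t, y' τ)
    (hderiv : ∀ᵐ t ∂(volume.restrict (Set.Ici (0:ℝ))), HasDerivAt y (y' t) t)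
    (hineq : ∀ᵐ t ∂(volume.restrict (Set.Ici (0:ℝ))),
      inner ℝ (y' t) (y t) ≤ -a * ‖y t‖ ^ 2 + b * ‖y t‖) :
    Filter.limsup (fun t => ‖y t‖) Filter.atTop ≤ b / a := by
  refine le_of_forall_pos_le_add fun ε hε => ?_
  set c := b / a + ε
  have hc : 0 < c := by positivity
  have hac : ∀ t, 0 ≤ t → AbsolutelyContinuousOnInterval (fun τ => ‖y τ‖ ^ 2) 0 t :=
    fun t ht => (absolutelyContinuousOnInterval_of_eq_add_intervalIntegral
      ((intervalIntegrable_iff_integrableOn_Icc_of_le ht).2 (hint t)) fun x hx =>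
        hftc x (uIcc_of_le ht ▸ hx).1).norm_sq
  have hdecay : ∀ᵐ t, 0 < t → c ^ 2 < ‖y t‖ ^ 2 →
      deriv (fun τ => ‖y τ‖ ^ 2) t ≤ -(2 * (a * ε * c)) := by
    filter_upwards [(ae_restrict_iff' measurableSet_Ici).1 hderiv,
      (ae_restrict_iff' measurableSet_Ici).1 hineq] with t hdt hit ht hct
    have hlt : c < ‖y t‖ := (pow_lt_pow_iff_left₀ hc.le (norm_nonneg _) two_ne_zero).1 hct
    rw [(hdt ht.le).norm_sq.deriv, real_inner_comm]
    linarith [hit ht.le, neg_mul_sq_add_mul_le ha hb hε hlt]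
  have hev := eventually_le_of_ae_deriv_le_neg (by positivity) (fun t => by positivity) hac hdecay
  refine limsup_le_of_le (isCoboundedUnder_le_of_le atTop fun t => norm_nonneg (y t)) ?_
  exact hev.mono fun t ht => (pow_le_pow_iff_left₀ (norm_nonneg _) hc.le two_ne_zero).1 ht

/-- If `y : [0,∞) → ℝⁿ` is absolutely continuous (continuous, with a.e. derivative `y'`
locally integrable and satisfying the fundamental theorem of calculus) and
`⟨y'(t), y(t)⟩ ≤ -a‖y(t)‖² + b‖y(t)‖` for a.e. `t ≥ 0` with `a > 0`, `b ≥ 0`, then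
`limsup_{t→∞} ‖y(t)‖ ≤ b/a`. -/
theorem limsup_norm_le_of_ae_inner_deriv_bound
    {n : ℕ} (y y' : ℝ → EuclideanSpace ℝ (Fin n)) (a b : ℝ)
    (ha : 0 < a) (hb : 0 ≤ b)
    (hcont : ContinuousOn y (Set.Ici 0))
    (hint : ∀ T : ℝ, IntegrableOn y' (Set.Icc 0 T))
    (hftc : ∀ t ∈ Set.Ici (0:ℝ), y t = y 0 + ∫ τ in (0:ℝ)..t, y' τ)
    (hderiv : ∀ᵐ t ∂(volume.restrict (Set.Ici (0:ℝ))), HasDerivAt y (y' t) t)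
    (hineq : ∀ᵐ t ∂(volume.restrict (Set.Ici (0:ℝ))),
      inner ℝ (y' t) (y t) ≤ -a * ‖y t‖ ^ 2 + b * ‖y t‖) :
    Filter.limsup (fun t => ‖y t‖) Filter.atTop ≤ b / a :=
  limsup_norm_le_of_ae_inner_deriv_bound_general y y' a b ha hb hint hftc hderiv hineq
end

section
/- Let y : [0,∞) → ℝⁿ be absolutely continuous with ⟨y'(t), y(t)⟩ ≤ -a‖y(t)‖² + b‖y(t)‖ for almost every t ≥ 0, where a > 0 and b ≥ 0. If ‖y(T)‖ ≤ b/a for some T ≥ 0, then ‖y(t)‖ ≤ b/a for all t ≥ T. -/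
/-!
Away from the ball of radius `b / a` the hypothesis makes `⟪y', y⟫` negative, so the
absolutely continuous function `‖y‖²` can only decrease there. If `‖y t‖ > b / a`, let `s` be
the last time in `[T, t]` with `‖y s‖ ≤ b / a`; the fundamental theorem of calculus for
absolutely continuous functions on `[s, t]` then gives `‖y t‖² ≤ ‖y s‖² ≤ (b / a)²`.
-/

open MeasureTheory Set

namespace AbsolutelyContinuousOnInterval

theorem of_dist_le {X Y : Type*} [PseudoMetricSpace X] [PseudoMetricSpace Y]
    {f : ℝ → X} {g : ℝ → Y} {a b : ℝ} (hg : AbsolutelyContinuousOnInterval g a b)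
    (hfg : ∀ s ∈ uIcc a b, ∀ t ∈ uIcc a b, dist (f s) (f t) ≤ dist (g s) (g t)) :
    AbsolutelyContinuousOnInterval f a b := by
  rw [absolutelyContinuousOnInterval_iff] at hg ⊢
  intro ε hε
  obtain ⟨δ, hδ, hg⟩ := hg ε hε
  refine ⟨δ, hδ, fun E hE hlen => (Finset.sum_le_sum fun i hi => ?_).trans_lt (hg E hE hlen)⟩
  exact hfg _ (hE.1 i hi).1 _ (hE.1 i hi).2

theorem norm {E : Type*} [SeminormedAddCommGroup E] {f : ℝ → E} {a b : ℝ}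
    (hf : AbsolutelyContinuousOnInterval f a b) :
    AbsolutelyContinuousOnInterval (‖f ·‖) a b :=
  hf.of_dist_le fun _ _ _ _ => (dist_norm_norm_le _ _).trans_eq (dist_eq_norm _ _).symm

theorem of_eq_add_integral {E : Type*} [NormedAddCommGroup E] [NormedSpace ℝ E]
    {f f' : ℝ → E} {a b : ℝ} (hf' : IntervalIntegrable f' volume a b)
    (hf : ∀ t ∈ uIcc a b, f t = f a + ∫ τ in a..t, f' τ) :
    AbsolutelyContinuousOnInterval f a b := by
  refine (hf'.norm.absolutelyContinuousOnInterval_intervalIntegral left_mem_uIcc).of_dist_le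
    fun s hs t ht => ?_
  have hint : ∀ r ∈ uIcc a b, IntervalIntegrable f' volume a r :=
    fun r hr => hf'.mono_set (uIcc_subset_uIcc left_mem_uIcc hr)
  rw [dist_eq_norm, hf s hs, hf t ht, add_sub_add_left_eq_sub,
    intervalIntegral.integral_interval_sub_left (hint s hs) (hint t ht), Real.dist_eq,
    intervalIntegral.integral_interval_sub_left (hint s hs).norm (hint t ht).norm]
  exact intervalIntegral.norm_integral_le_abs_integral_norm

theorem le_of_ae_deriv_nonpos_of_lt {g : ℝ → ℝ} {a b c : ℝ} (hab : a ≤ b)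
    (hg : AbsolutelyContinuousOnInterval g a b) (ha : g a ≤ c)
    (hderiv : ∀ᵐ t, t ∈ Icc a b → c < g t → deriv g t ≤ 0) : g b ≤ c := by
  have hcont : ContinuousOn g (Icc a b) := uIcc_of_le hab ▸ hg.continuousOn
  have hclosed : IsClosed (Icc a b ∩ g ⁻¹' Iic c) :=
    hcont.preimage_isClosed_of_isClosed isClosed_Icc isClosed_Iic
  obtain ⟨s, ⟨⟨has, hsb⟩, hs⟩, hsup⟩ :=
    (isCompact_Icc.of_isClosed_subset hclosed inter_subset_left).exists_isGreatest
      ⟨a, left_mem_Icc.2 hab, ha⟩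
  have hsub : uIcc s b ⊆ uIcc a b :=
    uIcc_subset_uIcc (by simp [uIcc_of_le hab, has, hsb]) right_mem_uIcc
  have hgs : ∫ t in s..b, deriv g t = g b - g s := (hg.mono hsub).integral_deriv_eq_sub
  have hneg : ∫ t in s..b, deriv g t ≤ 0 := by
    rw [intervalIntegral.integral_of_le hsb]
    refine setIntegral_nonpos_ae measurableSet_Ioc ?_
    filter_upwards [hderiv] with t ht hst
    have htI : t ∈ Icc a b := ⟨has.trans hst.1.le, hst.2⟩
    exact ht htI (not_le.1 fun hgt => hst.1.not_ge (hsup ⟨htI, hgt⟩))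
  linarith [show g s ≤ c from hs]

end AbsolutelyContinuousOnInterval

theorem norm_le_invariance_of_ae_inner_deriv_bound_general
    {n : ℕ} (y y' : ℝ → EuclideanSpace ℝ (Fin n)) (a b T : ℝ)
    (ha : 0 < a) (hT : 0 ≤ T)
    (hint : ∀ S : ℝ, IntegrableOn y' (Set.Icc 0 S))
    (hftc : ∀ t ∈ Set.Ici (0:ℝ), y t = y 0 + ∫ τ in (0:ℝ)..t, y' τ)
    (hderiv : ∀ᵐ t ∂(volume.restrict (Set.Ici (0:ℝ))), HasDerivAt y (y' t) t)
    (hineq : ∀ᵐ t ∂(volume.restrict (Set.Ici (0:ℝ))),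
      inner ℝ (y' t) (y t) ≤ -a * ‖y t‖ ^ 2 + b * ‖y t‖)
    (hinit : ‖y T‖ ≤ b / a) :
    ∀ t, T ≤ t → ‖y t‖ ≤ b / a := by
  intro t hTt
  have h0t : 0 ≤ t := hT.trans hTt
  have hc : 0 ≤ b / a := (norm_nonneg _).trans hinit
  have hy : AbsolutelyContinuousOnInterval y 0 t :=
    .of_eq_add_integral ((intervalIntegrable_iff_integrableOn_Icc_of_le h0t).2 (hint t))
      fun τ hτ => hftc τ (uIcc_of_le h0t ▸ hτ).1
  have hy2 : AbsolutelyContinuousOnInterval (fun τ => ‖y τ‖ ^ 2) T t := by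
    have hn := (hy.mono (uIcc_subset_uIcc (by rw [uIcc_of_le h0t]; exact ⟨hT, hTt⟩)
      right_mem_uIcc)).norm
    simpa only [sq] using hn.fun_mul hn
  have hdecr : ∀ᵐ τ, τ ∈ Icc T t → (b / a) ^ 2 < ‖y τ‖ ^ 2 →
      deriv (fun τ => ‖y τ‖ ^ 2) τ ≤ 0 := by
    rw [ae_restrict_iff' measurableSet_Ici] at hderiv hineq
    filter_upwards [hderiv, hineq] with τ hdτ hiτ hτ hlt
    have h0τ : 0 ≤ τ := hT.trans hτ.1
    rw [(hdτ h0τ).norm_sq.deriv, real_inner_comm]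
    have hgt : b / a < ‖y τ‖ := (sq_lt_sq₀ hc (norm_nonneg _)).1 hlt
    have hbr : b < ‖y τ‖ * a := (div_lt_iff₀ ha).1 hgt
    nlinarith [hiτ h0τ, mul_lt_mul_of_pos_left hbr (hc.trans_lt hgt)]
  have hsq :=
    hy2.le_of_ae_deriv_nonpos_of_lt hTt (pow_le_pow_left₀ (norm_nonneg _) hinit 2) hdecr
  exact (sq_le_sq₀ (norm_nonneg _) hc).1 hsq

/-- If `y : [0,∞) → ℝⁿ` is absolutely continuous with
`⟨y'(t), y(t)⟩ ≤ -a‖y(t)‖² + b‖y(t)‖` for a.e. `t ≥ 0` (`a > 0`, `b ≥ 0`), and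
`‖y(T)‖ ≤ b/a` for some `T ≥ 0`, then `‖y(t)‖ ≤ b/a` for all `t ≥ T`. -/
theorem norm_le_invariance_of_ae_inner_deriv_bound
    {n : ℕ} (y y' : ℝ → EuclideanSpace ℝ (Fin n)) (a b T : ℝ)
    (ha : 0 < a) (hb : 0 ≤ b) (hT : 0 ≤ T)
    (hcont : ContinuousOn y (Set.Ici 0))
    (hint : ∀ S : ℝ, IntegrableOn y' (Set.Icc 0 S))
    (hftc : ∀ t ∈ Set.Ici (0:ℝ), y t = y 0 + ∫ τ in (0:ℝ)..t, y' τ)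
    (hderiv : ∀ᵐ t ∂(volume.restrict (Set.Ici (0:ℝ))), HasDerivAt y (y' t) t)
    (hineq : ∀ᵐ t ∂(volume.restrict (Set.Ici (0:ℝ))),
      inner ℝ (y' t) (y t) ≤ -a * ‖y t‖ ^ 2 + b * ‖y t‖)
    (hinit : ‖y T‖ ≤ b / a) :
    ∀ t, T ≤ t → ‖y t‖ ≤ b / a :=
  norm_le_invariance_of_ae_inner_deriv_bound_general y y' a b T ha hT hint hftc hderiv hineq hinit
end

section
/- Let A ∈ ℝ^{n×n} be symmetric positive definite and B ∈ ℝ^{k×n} have full row rank. Define Σ := A⁻¹Bᵀ(BA⁻¹Bᵀ)⁻¹B and Π := I - Σ. Then ‖Π‖ ≤ √(λmax(A)/λmin(A)) and ‖Σ‖ ≤ √(λmax(A)/λmin(A)), where ‖·‖ denotes the operator 2-norm. -/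
/-!
`Σ` is idempotent and `AΣ = Bᵀ(BA⁻¹Bᵀ)⁻¹B` is symmetric, so `Σ` and `Π = I - Σ` are complementary
orthogonal projections for the inner product `⟨x, y⟩_A = x ⬝ᵥ A y`. Hence
`‖Σv‖²_A + ‖Πv‖²_A = ‖v‖²_A`, and each is a contraction in the `A`-norm. The bound follows from
`λmin ‖x‖² ≤ ‖x‖²_A ≤ λmax ‖x‖²`.
-/

open Matrix

namespace Matrix

section CommRing

variable {R : Type*} [CommRing R] {n m : Type*} [Fintype n] [Fintype m]

/-- `P` is an orthogonal projection for the bilinear form `x ⬝ᵥ A *ᵥ y`. -/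
structure IsOrthProjWrt (A P : Matrix n n R) : Prop where
  mul_self : P * P = P
  transpose_mul : Pᵀ * A = A * P

variable {A P : Matrix n n R}

theorem IsOrthProjWrt.mulVec_dotProduct_mulVec (hP : IsOrthProjWrt A P) (v : n → R) :
    (P *ᵥ v) ⬝ᵥ A *ᵥ (P *ᵥ v) = v ⬝ᵥ (A * P) *ᵥ v := by
  rw [mulVec_mulVec, ← vecMul_transpose P v, ← dotProduct_mulVec, mulVec_mulVec,
    ← Matrix.mul_assoc, hP.transpose_mul, Matrix.mul_assoc, hP.mul_self]

variable [DecidableEq n]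

theorem IsOrthProjWrt.one_sub (hP : IsOrthProjWrt A P) : IsOrthProjWrt A (1 - P) where
  mul_self := by rw [sub_mul, mul_sub, mul_sub, hP.mul_self]; simp
  transpose_mul := by rw [transpose_sub, transpose_one, sub_mul, hP.transpose_mul, mul_sub]; simp

theorem IsOrthProjWrt.mulVec_dotProduct_mulVec_add_one_sub (hP : IsOrthProjWrt A P)
    (v : n → R) :
    (P *ᵥ v) ⬝ᵥ A *ᵥ (P *ᵥ v) + ((1 - P) *ᵥ v) ⬝ᵥ A *ᵥ ((1 - P) *ᵥ v) = v ⬝ᵥ A *ᵥ v := by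
  rw [hP.mulVec_dotProduct_mulVec, hP.one_sub.mulVec_dotProduct_mulVec, ← dotProduct_add,
    ← add_mulVec, ← Matrix.mul_add, add_sub_cancel, Matrix.mul_one]

theorem nonsing_inv_mul_mul_nonsing_inv [DecidableEq m] (M : Matrix m m R) :
    M⁻¹ * M * M⁻¹ = M⁻¹ := by
  by_cases hM : IsUnit M.det
  · rw [nonsing_inv_mul M hM, Matrix.one_mul]
  · simp [nonsing_inv_apply_not_isUnit M hM]

theorem isOrthProjWrt_inv_mul_transpose_mul [DecidableEq m] (hAs : A.IsSymm) (hA : IsUnit A.det)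
    (B : Matrix m n R) : IsOrthProjWrt A (A⁻¹ * Bᵀ * (B * A⁻¹ * Bᵀ)⁻¹ * B) where
  mul_self := by
    conv_rhs => rw [← nonsing_inv_mul_mul_nonsing_inv (B * A⁻¹ * Bᵀ)]
    simp only [Matrix.mul_assoc]
  transpose_mul := by
    have hMt : (B * A⁻¹ * Bᵀ)ᵀ = B * A⁻¹ * Bᵀ := by
      rw [transpose_mul, transpose_mul, transpose_transpose, transpose_nonsing_inv, hAs.eq,
        Matrix.mul_assoc]
    rw [transpose_mul, transpose_mul, transpose_mul, transpose_transpose, transpose_nonsing_inv,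
      hMt, transpose_nonsing_inv, hAs.eq]
    simp only [Matrix.mul_assoc, nonsing_inv_mul A hA, mul_nonsing_inv_cancel_left A _ hA,
      Matrix.mul_one]

end CommRing

variable {n : Type*} [Fintype n] [DecidableEq n]

theorem IsOrthProjWrt.mulVec_dotProduct_mulVec_le {A P : Matrix n n ℝ} (hA : A.PosSemidef)
    (hP : IsOrthProjWrt A P) (v : n → ℝ) :
    (P *ᵥ v) ⬝ᵥ A *ᵥ (P *ᵥ v) ≤ v ⬝ᵥ A *ᵥ v := by
  have hcompl : 0 ≤ ((1 - P) *ᵥ v) ⬝ᵥ A *ᵥ ((1 - P) *ᵥ v) := by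
    simpa using hA.dotProduct_mulVec_nonneg ((1 - P) *ᵥ v)
  linarith [hP.mulVec_dotProduct_mulVec_add_one_sub v]

open scoped MatrixOrder in
theorem IsHermitian.mul_dotProduct_self_le_dotProduct_mulVec {A : Matrix n n ℝ}
    (hA : A.IsHermitian) {c : ℝ} (hc : ∀ i, c ≤ hA.eigenvalues i) (x : n → ℝ) :
    c * (x ⬝ᵥ x) ≤ x ⬝ᵥ A *ᵥ x := by
  have hle : algebraMap ℝ (Matrix n n ℝ) c ≤ A := by
    rw [algebraMap_le_iff_le_spectrum (ha := hA.isSelfAdjoint),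
      hA.spectrum_real_eq_range_eigenvalues]
    rintro _ ⟨i, rfl⟩
    exact hc i
  simpa [sub_mulVec, Algebra.algebraMap_eq_smul_one, smul_mulVec, dotProduct_sub] using
    (Matrix.le_iff.mp hle).dotProduct_mulVec_nonneg x

open scoped MatrixOrder in
theorem IsHermitian.dotProduct_mulVec_le_mul_dotProduct_self {A : Matrix n n ℝ}
    (hA : A.IsHermitian) {c : ℝ} (hc : ∀ i, hA.eigenvalues i ≤ c) (x : n → ℝ) :
    x ⬝ᵥ A *ᵥ x ≤ c * (x ⬝ᵥ x) := by
  have hle : A ≤ algebraMap ℝ (Matrix n n ℝ) c := by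
    rw [le_algebraMap_iff_spectrum_le (ha := hA.isSelfAdjoint),
      hA.spectrum_real_eq_range_eigenvalues]
    rintro _ ⟨i, rfl⟩
    exact hc i
  simpa [sub_mulVec, Algebra.algebraMap_eq_smul_one, smul_mulVec, dotProduct_sub] using
    (Matrix.le_iff.mp hle).dotProduct_mulVec_nonneg x

theorem IsOrthProjWrt.mul_dotProduct_self_mulVec_le {A P : Matrix n n ℝ} (hA : A.PosSemidef)
    (hP : IsOrthProjWrt A P) {lmin lmax : ℝ} (hmin : ∀ i, lmin ≤ hA.1.eigenvalues i)
    (hmax : ∀ i, hA.1.eigenvalues i ≤ lmax) (v : n → ℝ) :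
    lmin * ((P *ᵥ v) ⬝ᵥ (P *ᵥ v)) ≤ lmax * (v ⬝ᵥ v) :=
  calc lmin * ((P *ᵥ v) ⬝ᵥ (P *ᵥ v))
      ≤ (P *ᵥ v) ⬝ᵥ A *ᵥ (P *ᵥ v) := hA.1.mul_dotProduct_self_le_dotProduct_mulVec hmin _
    _ ≤ v ⬝ᵥ A *ᵥ v := hP.mulVec_dotProduct_mulVec_le hA v
    _ ≤ lmax * (v ⬝ᵥ v) := hA.1.dotProduct_mulVec_le_mul_dotProduct_self hmax v

end Matrix

theorem Real.sqrt_sum_sq_le_of_mul_dotProduct_self_le {ι : Type*} [Fintype ι] {v w : ι → ℝ}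
    {a b : ℝ} (ha : 0 < a) (h : a * (w ⬝ᵥ w) ≤ b * (v ⬝ᵥ v)) :
    √(∑ i, w i ^ 2) ≤ √(b / a) * √(∑ i, v i ^ 2) := by
  simp only [dotProduct, ← sq] at h
  rw [← Real.sqrt_mul' _ (Finset.sum_nonneg fun i _ => sq_nonneg (v i))]
  refine Real.sqrt_le_sqrt ?_
  rw [div_mul_eq_mul_div, le_div_iff₀ ha]
  linarith

theorem oblique_projection_norm_bound_general
    {n k : ℕ} (A : Matrix (Fin n) (Fin n) ℝ) (B : Matrix (Fin k) (Fin n) ℝ)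
    (hA : A.PosDef)
    (lmax lmin : ℝ)
    (hmax : IsGreatest (Set.range hA.1.eigenvalues) lmax)
    (hmin : IsLeast (Set.range hA.1.eigenvalues) lmin)
    (Sg Pg : Matrix (Fin n) (Fin n) ℝ)
    (hSg : Sg = A⁻¹ * Bᵀ * (B * A⁻¹ * Bᵀ)⁻¹ * B)
    (hPg : Pg = 1 - Sg) :
    (∀ v : Fin n → ℝ,
        Real.sqrt (∑ i, (Pg.mulVec v i) ^ 2) ≤
          Real.sqrt (lmax / lmin) * Real.sqrt (∑ i, (v i) ^ 2)) ∧
    (∀ v : Fin n → ℝ,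
        Real.sqrt (∑ i, (Sg.mulVec v i) ^ 2) ≤
          Real.sqrt (lmax / lmin) * Real.sqrt (∑ i, (v i) ^ 2)) := by
  obtain ⟨i₀, rfl⟩ := hmin.1
  have hS : IsOrthProjWrt A Sg := hSg ▸
    isOrthProjWrt_inv_mul_transpose_mul (isHermitian_iff_isSymm.mp hA.1)
      ((isUnit_iff_isUnit_det A).mp hA.isUnit) B
  have bound : ∀ P, IsOrthProjWrt A P → ∀ v : Fin n → ℝ,
      √(∑ i, (P *ᵥ v) i ^ 2) ≤ √(lmax / hA.1.eigenvalues i₀) * √(∑ i, v i ^ 2) :=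
    fun P hP v => Real.sqrt_sum_sq_le_of_mul_dotProduct_self_le (hA.eigenvalues_pos i₀)
      (hP.mul_dotProduct_self_mulVec_le hA.posSemidef (fun i => hmin.2 ⟨i, rfl⟩)
        (fun i => hmax.2 ⟨i, rfl⟩) v)
  exact ⟨hPg ▸ bound Pg (hPg ▸ hS.one_sub), bound Sg hS⟩

/-- For symmetric positive definite `A` and full-row-rank `B`, the oblique projections
`Σ = A⁻¹Bᵀ(BA⁻¹Bᵀ)⁻¹B` and `Π = I - Σ` satisfy
`‖Π v‖ ≤ √(λmax/λmin)‖v‖` and `‖Σ v‖ ≤ √(λmax/λmin)‖v‖` in the Euclidean norm,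
i.e. their operator 2-norms are bounded by `√(λmax(A)/λmin(A))`. -/
theorem oblique_projection_norm_bound
    {n k : ℕ} (A : Matrix (Fin n) (Fin n) ℝ) (B : Matrix (Fin k) (Fin n) ℝ)
    (hA : A.PosDef) (hB : B.rank = k)
    (lmax lmin : ℝ)
    (hmax : IsGreatest (Set.range hA.1.eigenvalues) lmax)
    (hmin : IsLeast (Set.range hA.1.eigenvalues) lmin)
    (Sg Pg : Matrix (Fin n) (Fin n) ℝ)
    (hSg : Sg = A⁻¹ * Bᵀ * (B * A⁻¹ * Bᵀ)⁻¹ * B)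
    (hPg : Pg = 1 - Sg) :
    (∀ v : Fin n → ℝ,
        Real.sqrt (∑ i, (Pg.mulVec v i) ^ 2) ≤
          Real.sqrt (lmax / lmin) * Real.sqrt (∑ i, (v i) ^ 2)) ∧
    (∀ v : Fin n → ℝ,
        Real.sqrt (∑ i, (Sg.mulVec v i) ^ 2) ≤
          Real.sqrt (lmax / lmin) * Real.sqrt (∑ i, (v i) ^ 2)) :=
  oblique_projection_norm_bound_general A B hA lmax lmin hmax hmin Sg Pg hSg hPg
end

section
/- Let K ⊆ ℝⁿ be nonempty, closed, and convex and let f̂ : ℝⁿ → ℝ be α-strongly convex with β-Lipschitz gradient. For c ∈ ℝⁿ, let x*(c) denote the unique minimizer of x ↦ f̂(x - c) over K. Then the map c ↦ x*(c) is (β/α)-Lipschitz. -/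
/-!
The minimizer `u = x*(c)` satisfies the variational inequality `⟪∇f̂(u - c), y - u⟫ ≥ 0` on
`K`. Adding the inequalities for `u = x*(c)` tested at `v = x*(c')` and vice versa, and using
strong monotonicity of `∇f̂` at `u - c, v - c`, gives
`α ‖u - v‖² ≤ ⟪∇f̂(v - c') - ∇f̂(v - c), u - v⟫ ≤ β ‖c - c'‖ ‖u - v‖`.
-/

open scoped RealInnerProductSpace

section

variable {E : Type*} [NormedAddCommGroup E] [InnerProductSpace ℝ E]

theorem HasGradientAt.comp_sub_const [CompleteSpace E] {f : E → ℝ} {g x : E} (c : E)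
    (hf : HasGradientAt f g (x - c)) : HasGradientAt (fun y ↦ f (y - c)) g x := by
  simpa [Function.comp_def] using
    (hf.hasFDerivAt.comp x (hasFDerivAt_sub_const c)).hasGradientAt

theorem IsMinOn.inner_gradient_sub_nonneg [CompleteSpace E] {f : E → ℝ} {K : Set E} {g u y : E}
    (hK : Convex ℝ K) (hmin : IsMinOn f K u) (hf : HasGradientAt f g u) (hu : u ∈ K)
    (hy : y ∈ K) : 0 ≤ ⟪g, y - u⟫ := by
  simpa using hmin.localize.hasFDerivWithinAt_nonneg hf.hasFDerivAt.hasFDerivWithinAt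
    (sub_mem_posTangentConeAt_of_segment_subset (hK.segment_subset hu hy))

theorem norm_sub_le_of_variational_inequalities {g : E → E} {α β : ℝ} (hα : 0 < α)
    (hstrong : ∀ x y, α * ‖x - y‖ ^ 2 ≤ ⟪g x - g y, x - y⟫)
    (hglip : ∀ x y, ‖g x - g y‖ ≤ β * ‖x - y‖) {u v c c' : E}
    (hu : 0 ≤ ⟪g (u - c), v - u⟫) (hv : 0 ≤ ⟪g (v - c'), u - v⟫) :
    ‖u - v‖ ≤ β / α * ‖c - c'‖ := by
  have key : α * ‖u - v‖ ^ 2 ≤ ‖g (v - c') - g (v - c)‖ * ‖u - v‖ :=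
    calc α * ‖u - v‖ ^ 2 ≤ ⟪g (u - c) - g (v - c), u - v⟫ := by
          simpa using hstrong (u - c) (v - c)
      _ ≤ ⟪g (v - c') - g (v - c), u - v⟫ := by
          rw [← neg_sub u v, inner_neg_right] at hu
          simp only [inner_sub_left]
          linarith
      _ ≤ ‖g (v - c') - g (v - c)‖ * ‖u - v‖ := real_inner_le_norm _ _
  have hαw : α * ‖u - v‖ ≤ ‖g (v - c') - g (v - c)‖ := by
    rcases (norm_nonneg (u - v)).eq_or_lt with h | h
    · rw [← h, mul_zero]
      exact norm_nonneg _
    · exact le_of_mul_le_mul_right (by nlinarith) h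
  calc ‖u - v‖ ≤ ‖g (v - c') - g (v - c)‖ / α := (le_div_iff₀' hα).2 hαw
    _ ≤ β * ‖c - c'‖ / α := by
        gcongr
        simpa using hglip (v - c') (v - c)
    _ = β / α * ‖c - c'‖ := by ring

end

theorem constrained_translation_solution_map_lipschitz_general
    {n : ℕ} (K : Set (EuclideanSpace ℝ (Fin n)))
    (fhat : EuclideanSpace ℝ (Fin n) → ℝ)
    (ghat : EuclideanSpace ℝ (Fin n) → EuclideanSpace ℝ (Fin n))
    (xstar : EuclideanSpace ℝ (Fin n) → EuclideanSpace ℝ (Fin n))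
    (α β : ℝ) (hα : 0 < α)
    (hKconv : Convex ℝ K)
    (hgrad : ∀ x, HasGradientAt fhat (ghat x) x)
    (hstrong : ∀ x y, α * ‖x - y‖ ^ 2 ≤ ⟪ghat x - ghat y, x - y⟫)
    (hglip : ∀ x y, ‖ghat x - ghat y‖ ≤ β * ‖x - y‖)
    (hmem : ∀ c, xstar c ∈ K)
    (hmin : ∀ c, ∀ y ∈ K, fhat (xstar c - c) ≤ fhat (y - c)) :
    ∀ c c', ‖xstar c - xstar c'‖ ≤ (β / α) * ‖c - c'‖ := by
  have hvi : ∀ c, ∀ y ∈ K, 0 ≤ ⟪ghat (xstar c - c), y - xstar c⟫ := fun c _ hy ↦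
    (isMinOn_iff.2 (hmin c)).inner_gradient_sub_nonneg hKconv
      ((hgrad _).comp_sub_const c) (hmem c) hy
  intro c c'
  exact norm_sub_le_of_variational_inequalities hα hstrong hglip
    (hvi c _ (hmem c')) (hvi c' _ (hmem c))

/-- For `K` nonempty closed convex and `f̂` `α`-strongly convex with `β`-Lipschitz
gradient, the map sending the translation `c` to the minimizer `x*(c)` of
`x ↦ f̂(x - c)` over `K` is `(β/α)`-Lipschitz. -/
theorem constrained_translation_solution_map_lipschitz
    {n : ℕ} (K : Set (EuclideanSpace ℝ (Fin n)))
    (fhat : EuclideanSpace ℝ (Fin n) → ℝ)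
    (ghat : EuclideanSpace ℝ (Fin n) → EuclideanSpace ℝ (Fin n))
    (xstar : EuclideanSpace ℝ (Fin n) → EuclideanSpace ℝ (Fin n))
    (α β : ℝ) (hα : 0 < α) (hβ : 0 ≤ β)
    (hK : K.Nonempty) (hKc : IsClosed K) (hKconv : Convex ℝ K)
    (hgrad : ∀ x, HasGradientAt fhat (ghat x) x)
    (hstrong : ∀ x y, α * ‖x - y‖ ^ 2 ≤ ⟪ghat x - ghat y, x - y⟫)
    (hglip : ∀ x y, ‖ghat x - ghat y‖ ≤ β * ‖x - y‖)
    (hmem : ∀ c, xstar c ∈ K)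
    (hmin : ∀ c, ∀ y ∈ K, fhat (xstar c - c) ≤ fhat (y - c)) :
    ∀ c c', ‖xstar c - xstar c'‖ ≤ (β / α) * ‖c - c'‖ :=
  constrained_translation_solution_map_lipschitz_general K fhat ghat xstar α β hα hKconv hgrad
    hstrong hglip hmem hmin
end

section
/- Let Φ : ℝⁿ × [0,T] → ℝⁿ be measurable in t and, for an integrable γ : [0,T] → ℝ≥0, satisfy ‖Φ(x,t) - Φ(y,t)‖ ≤ γ(t)‖x-y‖ for all x, y and t. If x₁, x₂ : [0,T] → ℝⁿ are two absolutely continuous solutions of the perturbed sweeping process ẋ(t) ∈ Φ(x(t),t) - N_{x(t)}𝒳(t), x(t) ∈ 𝒳(t), with x₁(0) = x₂(0), where each 𝒳(t) is nonempty closed convex, then x₁ = x₂ on [0,T]. -/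
/-!
Monotonicity of the normal cones and the Lipschitz bound on `Φ` give, almost everywhere,
`⟪ẋ₁ - ẋ₂, x₁ - x₂⟫ ≤ γ ‖x₁ - x₂‖²`. Integrating the chain rule for `‖x₁ - x₂‖²`
(reduced to coordinates, where it is the fundamental theorem of calculus for absolutely
continuous real functions) yields `‖x₁ t - x₂ t‖² ≤ ∫₀ᵗ 2γ ‖x₁ - x₂‖²`, and Grönwall's
inequality with zero initial datum forces `x₁ = x₂`.
-/

open MeasureTheory
open scoped RealInnerProductSpace
open Set Filter Topology

section Primitive

variable {E : Type*} [NormedAddCommGroup E] [InnerProductSpace ℝ E] {a b : ℝ}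

theorem IntervalIntegrable.const_inner {v : ℝ → E} (c : E)
    (hv : IntervalIntegrable v volume a b) :
    IntervalIntegrable (fun x => ⟪c, v x⟫) volume a b :=
  ⟨hv.1.const_inner c, hv.2.const_inner c⟩

theorem intervalIntegral.integral_inner [CompleteSpace E] {v : ℝ → E}
    (hv : IntervalIntegrable v volume a b) (c : E) :
    ∫ x in a..b, ⟪c, v x⟫ = ⟪c, ∫ x in a..b, v x⟫ :=
  (innerSL ℝ c).intervalIntegral_comp_comm hv

theorem sq_intervalIntegral_eq_two_mul_integral {f : ℝ → ℝ}
    (hf : IntervalIntegrable f volume a b) :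
    (∫ x in a..b, f x) ^ 2 = 2 * ∫ x in a..b, f x * ∫ t in a..x, f t := by
  set F := fun x => ∫ t in a..x, f t
  have hF : AbsolutelyContinuousOnInterval F a b :=
    hf.absolutelyContinuousOnInterval_intervalIntegral left_mem_uIcc
  have hF' : ∀ᵐ x, x ∈ uIoc a b → deriv F x = f x := by
    filter_upwards [hf.ae_hasDerivAt_integral] with x hx hxab
    exact (hx (uIoc_subset_uIcc hxab) a left_mem_uIcc).deriv
  calc (F b) ^ 2 = F b * F b - F a * F a := by simp [F, sq]
    _ = ∫ x in a..b, deriv F x * F x + F x * deriv F x :=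
      (hF.integral_deriv_mul_eq_sub hF).symm
    _ = ∫ x in a..b, 2 * (f x * F x) := by
      refine intervalIntegral.integral_congr_ae ?_
      filter_upwards [hF'] with x hx hxab
      rw [hx hxab]; ring
    _ = 2 * ∫ x in a..b, f x * F x := intervalIntegral.integral_const_mul _ _

variable [FiniteDimensional ℝ E]

theorem IntervalIntegrable.inner_continuousOn {v w : ℝ → E}
    (hv : IntervalIntegrable v volume a b) (hw : ContinuousOn w (uIcc a b)) :
    IntervalIntegrable (fun x => ⟪v x, w x⟫) volume a b := by
  let e := stdOrthonormalBasis ℝ E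
  have hsum : (fun x => ⟪v x, w x⟫) = ∑ i, fun x => ⟪e i, v x⟫ * ⟪e i, w x⟫ := by
    ext x
    simp only [Finset.sum_apply, ← e.sum_inner_mul_inner (v x) (w x), real_inner_comm]
  rw [hsum]
  exact IntervalIntegrable.sum _ fun i _ =>
    (hv.const_inner (e i)).mul_continuousOn (continuousOn_const.inner hw)

theorem norm_sq_intervalIntegral_eq_two_mul_integral {v : ℝ → E}
    (hv : IntervalIntegrable v volume a b) :
    ‖∫ x in a..b, v x‖ ^ 2 = 2 * ∫ x in a..b, ⟪v x, ∫ t in a..x, v t⟫ := by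
  let e := stdOrthonormalBasis ℝ E
  have hprim : ∀ x ∈ uIcc a b, IntervalIntegrable v volume a x := fun x hx =>
    hv.mono_set (uIcc_subset_uIcc left_mem_uIcc hx)
  have hterm : ∀ i, IntervalIntegrable
      (fun x => ⟪e i, v x⟫ * ⟪e i, ∫ t in a..x, v t⟫) volume a b := fun i =>
    (hv.const_inner (e i)).mul_continuousOn (continuousOn_const.inner
      (intervalIntegral.continuousOn_primitive_interval' hv left_mem_uIcc))
  calc ‖∫ x in a..b, v x‖ ^ 2 = ∑ i, (∫ x in a..b, ⟪e i, v x⟫) ^ 2 := by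
        rw [← real_inner_self_eq_norm_sq, ← e.sum_inner_mul_inner]
        simp only [intervalIntegral.integral_inner hv, real_inner_comm (e _), sq]
    _ = ∑ i, 2 * ∫ x in a..b, ⟪e i, v x⟫ * ⟪e i, ∫ t in a..x, v t⟫ := by
        refine Finset.sum_congr rfl fun i _ => ?_
        rw [sq_intervalIntegral_eq_two_mul_integral (hv.const_inner (e i))]
        congr 1
        refine intervalIntegral.integral_congr fun x hx => ?_
        simp only [intervalIntegral.integral_inner (hprim x hx)]
    _ = 2 * ∫ x in a..b, ⟪v x, ∫ t in a..x, v t⟫ := by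
        rw [← Finset.mul_sum, ← intervalIntegral.integral_finsetSum fun i _ => hterm i]
        simp only [real_inner_comm (v _) (e _), e.sum_inner_mul_inner]

theorem norm_sq_le_intervalIntegral_of_inner_le {d v : ℝ → E} {γ : ℝ → ℝ} {a b : ℝ}
    (hv : IntegrableOn v (Icc a b)) (hγ : IntegrableOn γ (Icc a b))
    (hd : ∀ t ∈ Icc a b, d t = ∫ s in a..t, v s) (hdc : ContinuousOn d (Icc a b))
    (hinner : ∀ᵐ s ∂volume.restrict (Icc a b), ⟪v s, d s⟫ ≤ γ s * ‖d s‖ ^ 2) :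
    ∀ t ∈ Icc a b, ‖d t‖ ^ 2 ≤ ∫ s in a..t, 2 * γ s * ‖d s‖ ^ 2 := by
  intro t ht
  have hsub : uIcc a t ⊆ Icc a b := uIcc_subset_Icc (left_mem_Icc.2 (ht.1.trans ht.2)) ht
  have hvt : IntervalIntegrable v volume a t := (hv.mono_set hsub).intervalIntegrable
  have hdc' : ContinuousOn d (uIcc a t) := hdc.mono hsub
  calc ‖d t‖ ^ 2 = 2 * ∫ s in a..t, ⟪v s, d s⟫ := by
        rw [hd t ht, norm_sq_intervalIntegral_eq_two_mul_integral hvt]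
        congr 1
        exact intervalIntegral.integral_congr fun s hs => by rw [hd s (hsub hs)]
    _ ≤ 2 * ∫ s in a..t, γ s * ‖d s‖ ^ 2 := by
        gcongr
        exact intervalIntegral.integral_mono_ae_restrict ht.1 (hvt.inner_continuousOn hdc')
          ((hγ.mono_set hsub).intervalIntegrable.mul_continuousOn (hdc'.norm.pow 2))
          (ae_restrict_of_ae_restrict_of_subset (Icc_subset_Icc_right ht.2) hinner)
    _ = ∫ s in a..t, 2 * γ s * ‖d s‖ ^ 2 := by
        simp only [mul_assoc, intervalIntegral.integral_const_mul]

end Primitive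

section NormalCone

variable {E : Type*} [NormedAddCommGroup E] [InnerProductSpace ℝ E]

def normalCone (K : Set E) (x : E) : Set E := {u | ∀ y ∈ K, ⟪u, y - x⟫ ≤ 0}

theorem inner_sub_nonneg_of_mem_normalCone {K : Set E} {x₁ x₂ u₁ u₂ : E}
    (hx₁ : x₁ ∈ K) (hx₂ : x₂ ∈ K)
    (hu₁ : u₁ ∈ normalCone K x₁) (hu₂ : u₂ ∈ normalCone K x₂) :
    0 ≤ ⟪u₁ - u₂, x₁ - x₂⟫ := by
  have h₁ := hu₁ x₂ hx₂
  have h₂ := hu₂ x₁ hx₁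
  rw [← neg_sub x₁ x₂, inner_neg_right] at h₁
  rw [inner_sub_left]
  linarith

theorem inner_sub_le_of_mem_normalCone {K : Set E} {x₁ x₂ w₁ w₂ f₁ f₂ : E} {L : ℝ}
    (hx₁ : x₁ ∈ K) (hx₂ : x₂ ∈ K)
    (h₁ : f₁ - w₁ ∈ normalCone K x₁) (h₂ : f₂ - w₂ ∈ normalCone K x₂)
    (hf : ‖f₁ - f₂‖ ≤ L * ‖x₁ - x₂‖) :
    ⟪w₁ - w₂, x₁ - x₂⟫ ≤ L * ‖x₁ - x₂‖ ^ 2 := by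
  have hmono := inner_sub_nonneg_of_mem_normalCone hx₁ hx₂ h₁ h₂
  have hsplit : w₁ - w₂ = (f₁ - f₂) - ((f₁ - w₁) - (f₂ - w₂)) := by abel
  calc ⟪w₁ - w₂, x₁ - x₂⟫ ≤ ⟪f₁ - f₂, x₁ - x₂⟫ := by
        rw [hsplit, inner_sub_left]; linarith
    _ ≤ ‖f₁ - f₂‖ * ‖x₁ - x₂‖ := real_inner_le_norm _ _
    _ ≤ L * ‖x₁ - x₂‖ ^ 2 := by
        rw [sq, ← mul_assoc]; exact mul_le_mul_of_nonneg_right hf (norm_nonneg _)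

end NormalCone

theorem tendsto_intervalIntegral_nhdsGT {β : ℝ → ℝ} {c b : ℝ} (hcb : c < b)
    (hβ : IntervalIntegrable β volume c b) :
    Tendsto (fun t => ∫ s in c..t, β s) (𝓝[>] c) (𝓝 0) := by
  have hcont :=
    intervalIntegral.continuousOn_primitive_interval' hβ left_mem_uIcc c left_mem_uIcc
  rw [uIcc_of_le hcb.le] at hcont
  simpa using (hcont.mono_of_mem_nhdsWithin (Icc_mem_nhdsGT hcb)).tendsto

theorem eqOn_zero_of_le_intervalIntegral_mul {g β : ℝ → ℝ} {a b : ℝ}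
    (hg : ContinuousOn g (Icc a b)) (hg0 : ∀ t ∈ Icc a b, 0 ≤ g t)
    (hβ : IntegrableOn β (Icc a b)) (hβ0 : ∀ t ∈ Icc a b, 0 ≤ β t)
    (hle : ∀ t ∈ Icc a b, g t ≤ ∫ s in a..t, β s * g s) :
    EqOn g 0 (Icc a b) := by
  rcases lt_or_ge b a with hba | hab
  · simp [Icc_eq_empty_of_lt hba]
  have ha : a ∈ Icc a b := left_mem_Icc.2 hab
  have hint : ∀ {f : ℝ → ℝ}, IntegrableOn f (Icc a b) →
      ∀ s ∈ Icc a b, ∀ t ∈ Icc a b, IntervalIntegrable f volume s t :=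
    fun hf s hs t ht => (hf.mono_set (uIcc_subset_Icc hs ht)).intervalIntegrable
  have hβg : IntegrableOn (fun s => β s * g s) (Icc a b) := hβ.mul_continuousOn hg isCompact_Icc
  set G : ℝ → ℝ := fun t => ∫ s in a..t, β s * g s
  have hGc : ContinuousOn G (Icc a b) := by
    have := intervalIntegral.continuousOn_primitive_interval (μ := volume)
      (hβg.mono_set (uIcc_subset_Icc ha (right_mem_Icc.2 hab)))
    rwa [uIcc_of_le hab] at this
  have hGmono : MonotoneOn G (Icc a b) := fun s hs t ht hst =>
    intervalIntegral.integral_mono_interval le_rfl hs.1 hst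
      ((ae_restrict_iff' measurableSet_Ioc).2 (ae_of_all _ fun r hr =>
        mul_nonneg (hβ0 r ⟨hr.1.le, hr.2.trans ht.2⟩) (hg0 r ⟨hr.1.le, hr.2.trans ht.2⟩)))
      (hint hβg a ha t ht)
  -- As `g ≤ G` and `G` is monotone, `G t ≤ (∫ s in c..t, β s) * G t` after a zero `c` of `G`,
  -- and that factor is `< 1` for `t` close to `c`; zeros of `G` thus spread to the right.
  have hstep : ∀ c ∈ {t | G t = 0} ∩ Ico a b, {t | G t = 0} ∈ 𝓝[>] c := by
    rintro c ⟨hGc0, hc⟩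
    have hcI : c ∈ Icc a b := Ico_subset_Icc_self hc
    have hsmall := tendsto_intervalIntegral_nhdsGT hc.2 (hint hβ c hcI b (right_mem_Icc.2 hab))
    filter_upwards [hsmall.eventually (gt_mem_nhds one_pos), Ioo_mem_nhdsGT hc.2] with t hBt htb
    have htI : t ∈ Icc a b := ⟨hc.1.trans htb.1.le, htb.2.le⟩
    have hGle : G t ≤ (∫ s in c..t, β s) * G t :=
      calc G t = ∫ s in c..t, β s * g s := by
            simp only [G, mem_ofPred_eq] at hGc0 ⊢
            rw [← intervalIntegral.integral_add_adjacent_intervals (hint hβg a ha c hcI)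
              (hint hβg c hcI t htI), hGc0, zero_add]
        _ ≤ ∫ s in c..t, β s * G t := by
            refine intervalIntegral.integral_mono_on htb.1.le (hint hβg c hcI t htI)
              ((hint hβ c hcI t htI).mul_const _) fun s hs => ?_
            have hsI : s ∈ Icc a b := ⟨hc.1.trans hs.1, hs.2.trans htI.2⟩
            exact mul_le_mul_of_nonneg_left ((hle s hsI).trans (hGmono hsI htI hs.2)) (hβ0 s hsI)
        _ = (∫ s in c..t, β s) * G t := intervalIntegral.integral_mul_const _ _
    have hG0 : G a ≤ G t := hGmono ha htI htI.1
    simp only [G, intervalIntegral.integral_same] at hG0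
    show G t = 0
    nlinarith
  have hclosed : IsClosed ({t | G t = 0} ∩ Icc a b) := by
    rw [inter_comm]; exact hGc.preimage_isClosed_of_isClosed isClosed_Icc isClosed_singleton
  have hzero := hclosed.Icc_subset_of_forall_mem_nhdsWithin (by simp [G]) hstep
  intro t ht
  exact le_antisymm ((hle t ht).trans (hzero ht).le) (hg0 t ht)

theorem sweeping_process_uniqueness_general
    {n : ℕ} (T : ℝ)
    (Φ : EuclideanSpace ℝ (Fin n) → ℝ → EuclideanSpace ℝ (Fin n))
    (γ : ℝ → ℝ)
    (𝒳 : ℝ → Set (EuclideanSpace ℝ (Fin n)))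
    (x₁ x₂ x₁' x₂' : ℝ → EuclideanSpace ℝ (Fin n))
    (hγpos : ∀ t, 0 ≤ γ t) (hγint : IntegrableOn γ (Set.Icc 0 T))
    (hΦlip : ∀ t ∈ Set.Icc (0:ℝ) T, ∀ x y, ‖Φ x t - Φ y t‖ ≤ γ t * ‖x - y‖)
    -- x₁ is an absolutely continuous solution:
    (h₁cont : ContinuousOn x₁ (Set.Icc 0 T))
    (h₁int : IntegrableOn x₁' (Set.Icc 0 T))
    (h₁ftc : ∀ t ∈ Set.Icc (0:ℝ) T, x₁ t = x₁ 0 + ∫ τ in (0:ℝ)..t, x₁' τ)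
    (h₁mem : ∀ t ∈ Set.Icc (0:ℝ) T, x₁ t ∈ 𝒳 t)
    (h₁sol : ∀ᵐ t ∂(volume.restrict (Set.Icc (0:ℝ) T)),
      HasDerivAt x₁ (x₁' t) t ∧
      ∀ y ∈ 𝒳 t, ⟪Φ (x₁ t) t - x₁' t, y - x₁ t⟫ ≤ 0)
    -- x₂ is an absolutely continuous solution:
    (h₂cont : ContinuousOn x₂ (Set.Icc 0 T))
    (h₂int : IntegrableOn x₂' (Set.Icc 0 T))
    (h₂ftc : ∀ t ∈ Set.Icc (0:ℝ) T, x₂ t = x₂ 0 + ∫ τ in (0:ℝ)..t, x₂' τ)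
    (h₂mem : ∀ t ∈ Set.Icc (0:ℝ) T, x₂ t ∈ 𝒳 t)
    (h₂sol : ∀ᵐ t ∂(volume.restrict (Set.Icc (0:ℝ) T)),
      HasDerivAt x₂ (x₂' t) t ∧
      ∀ y ∈ 𝒳 t, ⟪Φ (x₂ t) t - x₂' t, y - x₂ t⟫ ≤ 0)
    (hinit : x₁ 0 = x₂ 0) :
    ∀ t ∈ Set.Icc (0:ℝ) T, x₁ t = x₂ t := by
  set d := fun t => x₁ t - x₂ t
  set v := fun t => x₁' t - x₂' t
  have hd : ∀ t ∈ Icc 0 T, d t = ∫ s in 0..t, v s := fun t ht => by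
    have hsub : uIcc 0 t ⊆ Icc 0 T := uIcc_subset_Icc (left_mem_Icc.2 (ht.1.trans ht.2)) ht
    rw [intervalIntegral.integral_sub (h₁int.mono_set hsub).intervalIntegrable
      (h₂int.mono_set hsub).intervalIntegrable]
    simp only [d, h₁ftc t ht, h₂ftc t ht, hinit]
    abel
  have hdc : ContinuousOn d (Icc 0 T) := h₁cont.sub h₂cont
  have hinner : ∀ᵐ s ∂volume.restrict (Icc 0 T), ⟪v s, d s⟫ ≤ γ s * ‖d s‖ ^ 2 := by
    filter_upwards [h₁sol, h₂sol, ae_restrict_mem measurableSet_Icc] with s hs₁ hs₂ hs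
    exact inner_sub_le_of_mem_normalCone (h₁mem s hs) (h₂mem s hs) hs₁.2 hs₂.2 (hΦlip s hs _ _)
  have hzero := eqOn_zero_of_le_intervalIntegral_mul (hdc.norm.pow 2) (fun _ _ => sq_nonneg _)
    (hγint.const_mul 2) (fun t _ => mul_nonneg zero_le_two (hγpos t))
    (norm_sq_le_intervalIntegral_of_inner_le (h₁int.sub h₂int) hγint hd hdc hinner)
  intro t ht
  simpa [d, sub_eq_zero] using hzero ht

/-- Uniqueness of solutions of the perturbed sweeping process
`ẋ(t) ∈ Φ(x(t),t) - N_{x(t)}𝒳(t)`, `x(t) ∈ 𝒳(t)`: if `Φ(·,t)` is `γ(t)`-Lipschitz with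
`γ` integrable, the sets `𝒳(t)` are nonempty closed convex, and `x₁, x₂` are two
absolutely continuous solutions with the same initial condition, then `x₁ = x₂` on `[0,T]`. -/
theorem sweeping_process_uniqueness
    {n : ℕ} (T : ℝ) (hT : 0 < T)
    (Φ : EuclideanSpace ℝ (Fin n) → ℝ → EuclideanSpace ℝ (Fin n))
    (γ : ℝ → ℝ)
    (𝒳 : ℝ → Set (EuclideanSpace ℝ (Fin n)))
    (x₁ x₂ x₁' x₂' : ℝ → EuclideanSpace ℝ (Fin n))
    (hΦmeas : ∀ x, Measurable (fun t => Φ x t))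
    (hγpos : ∀ t, 0 ≤ γ t) (hγint : IntegrableOn γ (Set.Icc 0 T))
    (hΦlip : ∀ t ∈ Set.Icc (0:ℝ) T, ∀ x y, ‖Φ x t - Φ y t‖ ≤ γ t * ‖x - y‖)
    (h𝒳 : ∀ t ∈ Set.Icc (0:ℝ) T, (𝒳 t).Nonempty ∧ IsClosed (𝒳 t) ∧ Convex ℝ (𝒳 t))
    -- x₁ is an absolutely continuous solution:
    (h₁cont : ContinuousOn x₁ (Set.Icc 0 T))
    (h₁int : IntegrableOn x₁' (Set.Icc 0 T))
    (h₁ftc : ∀ t ∈ Set.Icc (0:ℝ) T, x₁ t = x₁ 0 + ∫ τ in (0:ℝ)..t, x₁' τ)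
    (h₁mem : ∀ t ∈ Set.Icc (0:ℝ) T, x₁ t ∈ 𝒳 t)
    (h₁sol : ∀ᵐ t ∂(volume.restrict (Set.Icc (0:ℝ) T)),
      HasDerivAt x₁ (x₁' t) t ∧
      ∀ y ∈ 𝒳 t, ⟪Φ (x₁ t) t - x₁' t, y - x₁ t⟫ ≤ 0)
    -- x₂ is an absolutely continuous solution:
    (h₂cont : ContinuousOn x₂ (Set.Icc 0 T))
    (h₂int : IntegrableOn x₂' (Set.Icc 0 T))
    (h₂ftc : ∀ t ∈ Set.Icc (0:ℝ) T, x₂ t = x₂ 0 + ∫ τ in (0:ℝ)..t, x₂' τ)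
    (h₂mem : ∀ t ∈ Set.Icc (0:ℝ) T, x₂ t ∈ 𝒳 t)
    (h₂sol : ∀ᵐ t ∂(volume.restrict (Set.Icc (0:ℝ) T)),
      HasDerivAt x₂ (x₂' t) t ∧
      ∀ y ∈ 𝒳 t, ⟪Φ (x₂ t) t - x₂' t, y - x₂ t⟫ ≤ 0)
    (hinit : x₁ 0 = x₂ 0) :
    ∀ t ∈ Set.Icc (0:ℝ) T, x₁ t = x₂ t :=
  sweeping_process_uniqueness_general T Φ γ 𝒳 x₁ x₂ x₁' x₂' hγpos hγint hΦlip h₁cont h₁int h₁ftc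
    h₁mem h₁sol h₂cont h₂int h₂ftc h₂mem h₂sol hinit
end

section
/- Let U ∈ ℝ^{m×n} and v, v' ∈ ℝᵐ be such that the polyhedra 𝒳 = {x : Ux ≤ v} and 𝒳' = {x : Ux ≤ v'} are nonempty, and suppose there is ω > 0 such that for every x on the boundary of either polyhedron the active-row submatrix U_I satisfies U_I U_Iᵀ ⪰ ω²I. Then for every z ∈ ℝⁿ, |d(z, 𝒳') - d(z, 𝒳)| ≤ (1/ω)‖v' - v‖, where d denotes Euclidean distance to a set. -/
/-!
Let `x` satisfy `Ux ≤ v` and let `y` be its metric projection onto `{Ux ≤ v'}`. Then `x - y` is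
in the normal cone at `y`, which by Farkas' lemma lies in the closure of the cone spanned by the
rows active at `y`. For `s = Uᵀμ` in that cone (`μ ≥ 0`, supported on active rows),
`⟪s, x - y⟫ = ⟪μ, Ux - v'⟫ ≤ ‖μ‖ ‖v - v'‖ ≤ ‖s‖ ‖v - v'‖ / ω` by the LICQ bound `ω ‖μ‖ ≤ ‖Uᵀμ‖`;
this closed condition passes to `s = x - y` and gives `‖x - y‖ ≤ ‖v - v'‖ / ω`. By symmetry the
Hausdorff distance of the two polyhedra is at most `‖v - v'‖ / ω`, and that bounds the difference
of their distance functions.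
-/

open RealInnerProductSpace Metric Filter Topology

section Polyhedron

variable {E : Type*} [NormedAddCommGroup E] [InnerProductSpace ℝ E] {ι : Type*}

def polyhedron (u : ι → E) (b : ι → ℝ) : Set E := {x | ∀ i, ⟪u i, x⟫ ≤ b i}

/-- The uniform LICQ condition `U_I U_Iᵀ ⪰ ω² I` for the set `I` of constraints active at `y`,
where `U` has rows `u i`. -/
def LICQAt [Fintype ι] (ω : ℝ) (u : ι → E) (b : ι → ℝ) (y : E) : Prop :=
  ∀ μ : ι → ℝ, (∀ i, μ i ≠ 0 → ⟪u i, y⟫ = b i) → ω ^ 2 * ∑ i, μ i ^ 2 ≤ ‖∑ i, μ i • u i‖ ^ 2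

variable {u : ι → E} {b b' : ι → ℝ}

theorem convex_polyhedron : Convex ℝ (polyhedron u b) := by
  rw [polyhedron, Set.ofPred_forall]
  exact convex_iInter fun i => convex_halfSpace_le (innerₗ E (u i)).isLinear (b i)

theorem isClosed_polyhedron : IsClosed (polyhedron u b) := by
  rw [polyhedron, Set.ofPred_forall]
  exact isClosed_iInter fun i => isClosed_le (by fun_prop) continuous_const

theorem eventually_add_smul_mem_polyhedron [Finite ι] {y d : E} (hy : y ∈ polyhedron u b)
    (hd : ∀ i, ⟪u i, y⟫ = b i → ⟪u i, d⟫ ≤ 0) :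
    ∀ᶠ t in 𝓝[>] (0 : ℝ), y + t • d ∈ polyhedron u b := by
  refine eventually_all.2 fun i => ?_
  rcases (hy i).eq_or_lt with hact | hlt
  · filter_upwards [self_mem_nhdsWithin] with t (ht : 0 < t)
    rw [inner_add_right, real_inner_smul_right, hact]
    nlinarith [hd i hact]
  · have hcont : Continuous fun t : ℝ => ⟪u i, y + t • d⟫ := by fun_prop
    have hlt₀ : (fun t : ℝ => ⟪u i, y + t • d⟫) 0 < b i := by simpa using hlt
    exact ((hcont.continuousAt.eventually_lt continuousAt_const hlt₀).filter_mono
      nhdsWithin_le_nhds).mono fun t ht => ht.le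

theorem mem_closure_hull_active_of_forall_inner_sub_nonpos [Finite ι] [CompleteSpace E] {y p : E}
    (hy : y ∈ polyhedron u b) (hp : ∀ w ∈ polyhedron u b, ⟪p, w - y⟫ ≤ 0) :
    p ∈ closure (PointedCone.hull ℝ (u '' {i | ⟪u i, y⟫ = b i}) : Set E) := by
  let C : ProperCone ℝ E :=
    ⟨(PointedCone.hull ℝ (u '' {i | ⟪u i, y⟫ = b i})).closure, isClosed_closure⟩
  by_contra hpC
  obtain ⟨w, hw, hpw⟩ := C.hyperplane_separation' hpC
  have hactive : ∀ i, ⟪u i, y⟫ = b i → ⟪u i, -w⟫ ≤ 0 := fun i hi => by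
    rw [inner_neg_right, neg_nonpos]
    exact hw _ (subset_closure (PointedCone.subset_hull ⟨i, hi, rfl⟩))
  obtain ⟨t, htK, ht⟩ :=
    ((eventually_add_smul_mem_polyhedron hy hactive).and self_mem_nhdsWithin).exists
  have := hp _ htK
  rw [add_sub_cancel_left, real_inner_smul_right, inner_neg_right] at this
  nlinarith [show (0 : ℝ) < t from ht]

theorem inner_sub_le_of_mem_hull_active [Fintype ι] {ω : ℝ} (hω : 0 < ω) {x y s : E}
    (hx : x ∈ polyhedron u b)
    (hLICQ : LICQAt ω u b' y)
    (hs : s ∈ PointedCone.hull ℝ (u '' {i | ⟪u i, y⟫ = b' i})) :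
    ⟪s, x - y⟫ ≤ ω⁻¹ * √(∑ i, (b i - b' i) ^ 2) * ‖s‖ := by
  obtain ⟨l, hl, rfl⟩ := (Finsupp.mem_span_image_iff_linearCombination _).1 hs
  set μ : ι → ℝ := fun i => l i
  have hlμ : Finsupp.linearCombination _ u l = ∑ i, μ i • u i := by
    simp only [Finsupp.linearCombination_apply, μ, Nonneg.coe_smul]
    exact Finsupp.sum_fintype _ _ fun i => zero_smul _ _
  have hμ_active : ∀ i, μ i ≠ 0 → ⟪u i, y⟫ = b' i := fun i hi =>
    (Finsupp.mem_supported _ l).1 hl (by simpa [μ, ← Subtype.val_inj] using hi)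
  have hμ_norm : √(∑ i, μ i ^ 2) ≤ ω⁻¹ * ‖∑ i, μ i • u i‖ := by
    rw [le_inv_mul_iff₀ hω, ← Real.sqrt_sq hω.le, ← Real.sqrt_mul (sq_nonneg ω),
      ← Real.sqrt_sq (norm_nonneg _)]
    exact Real.sqrt_le_sqrt (hLICQ μ hμ_active)
  rw [hlμ]
  calc ⟪∑ i, μ i • u i, x - y⟫ = ∑ i, μ i * ⟪u i, x - y⟫ := by
        simp only [sum_inner, real_inner_smul_left]
    _ ≤ ∑ i, μ i * (b i - b' i) := by
        refine Finset.sum_le_sum fun i _ => ?_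
        by_cases hi : μ i = 0
        · simp [hi]
        · refine mul_le_mul_of_nonneg_left ?_ (l i).2
          rw [inner_sub_right, hμ_active i hi]
          linarith [hx i]
    _ ≤ √(∑ i, μ i ^ 2) * √(∑ i, (b i - b' i) ^ 2) := Real.sum_mul_le_sqrt_mul_sqrt _ _ _
    _ ≤ ω⁻¹ * √(∑ i, (b i - b' i) ^ 2) * ‖∑ i, μ i • u i‖ := by
        rw [mul_right_comm]
        exact mul_le_mul_of_nonneg_right hμ_norm (Real.sqrt_nonneg _)

theorem norm_sub_le_of_mem_closure_hull_active [Fintype ι] {ω : ℝ} (hω : 0 < ω) {x y : E}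
    (hx : x ∈ polyhedron u b)
    (hLICQ : LICQAt ω u b' y)
    (hxy : x - y ∈ closure (PointedCone.hull ℝ (u '' {i | ⟪u i, y⟫ = b' i}) : Set E)) :
    ‖x - y‖ ≤ ω⁻¹ * √(∑ i, (b i - b' i) ^ 2) := by
  set c := ω⁻¹ * √(∑ i, (b i - b' i) ^ 2)
  have hclosed : IsClosed {s : E | ⟪s, x - y⟫ ≤ c * ‖s‖} :=
    isClosed_le (by fun_prop) (by fun_prop)
  have hsq : ‖x - y‖ ^ 2 ≤ c * ‖x - y‖ := by
    rw [← real_inner_self_eq_norm_sq]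
    exact closure_minimal (fun s hs => inner_sub_le_of_mem_hull_active hω hx hLICQ hs) hclosed hxy
  rcases (norm_nonneg (x - y)).eq_or_lt with h0 | hpos
  · rw [← h0]
    positivity
  · nlinarith

theorem exists_mem_polyhedron_dist_le [Fintype ι] [CompleteSpace E] {ω : ℝ} (hω : 0 < ω)
    (hne : (polyhedron u b').Nonempty)
    (hLICQ : ∀ y ∈ polyhedron u b', LICQAt ω u b' y)
    {x : E} (hx : x ∈ polyhedron u b) :
    ∃ y ∈ polyhedron u b', dist x y ≤ ω⁻¹ * √(∑ i, (b i - b' i) ^ 2) := by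
  obtain ⟨y, hy, hmin⟩ := exists_norm_eq_iInf_of_complete_convex hne
    isClosed_polyhedron.isComplete convex_polyhedron x
  have hnormal := (norm_eq_iInf_iff_real_inner_le_zero convex_polyhedron hy).1 hmin
  refine ⟨y, hy, ?_⟩
  rw [dist_eq_norm]
  exact norm_sub_le_of_mem_closure_hull_active hω hx (hLICQ y hy)
    (mem_closure_hull_active_of_forall_inner_sub_nonpos hy hnormal)

end Polyhedron

theorem abs_infDist_sub_infDist_le_of_forall_exists_dist_le {α : Type*} [PseudoMetricSpace α]
    {s t : Set α} {r : ℝ} (hr : 0 ≤ r) (hst : ∀ x ∈ s, ∃ y ∈ t, dist x y ≤ r)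
    (hts : ∀ x ∈ t, ∃ y ∈ s, dist x y ≤ r) (z : α) :
    |infDist z t - infDist z s| ≤ r := by
  have hfin : hausdorffEDist s t ≠ ⊤ :=
    ne_top_of_le_ne_top ENNReal.ofReal_ne_top <| hausdorffEDist_le_of_mem_edist
      (fun x hx => (hst x hx).imp fun y ⟨hy, hxy⟩ => ⟨hy, (edist_le_ofReal hr).2 hxy⟩)
      (fun x hx => (hts x hx).imp fun y ⟨hy, hxy⟩ => ⟨hy, (edist_le_ofReal hr).2 hxy⟩)
  have hH := hausdorffDist_le_of_mem_dist hr hst hts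
  rw [abs_sub_le_iff]
  constructor
  · linarith [infDist_le_infDist_add_hausdorffDist (x := z) hfin]
  · rw [hausdorffEDist_comm] at hfin
    linarith [infDist_le_infDist_add_hausdorffDist (x := z) hfin,
      hausdorffDist_comm (s := s) (t := t)]

theorem inner_toLp_row {ι κ : Type*} [Fintype κ] (U : Matrix ι κ ℝ) (i : ι)
    (x : EuclideanSpace ℝ κ) : ⟪WithLp.toLp 2 (U i), x⟫ = ∑ j, U i j * x j := by
  simp [EuclideanSpace.inner_eq_star_dotProduct, dotProduct, mul_comm]

theorem norm_sum_smul_toLp_row_sq {ι κ : Type*} [Fintype ι] [Fintype κ] (U : Matrix ι κ ℝ)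
    (μ : ι → ℝ) : ‖∑ i, μ i • WithLp.toLp 2 (U i)‖ ^ 2 = ∑ j, (∑ i, μ i * U i j) ^ 2 := by
  simp [EuclideanSpace.real_norm_sq_eq, WithLp.ofLp_sum]

/-- Lipschitz dependence of a polyhedron on its right-hand side: if
`𝒳 = {x : Ux ≤ v}` and `𝒳' = {x : Ux ≤ v'}` are nonempty and the active rows satisfy
the uniform full-rank condition `U_I U_Iᵀ ⪰ ω²I`, then for every `z`,
`|d(z,𝒳') - d(z,𝒳)| ≤ (1/ω)‖v' - v‖`. -/
theorem polyhedron_rhs_distance_lipschitz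
    {m n : ℕ} (U : Matrix (Fin m) (Fin n) ℝ) (v v' : Fin m → ℝ) (ω : ℝ) (hω : 0 < ω)
    (𝒳 𝒳' : Set (EuclideanSpace ℝ (Fin n)))
    (h𝒳 : 𝒳 = {x | ∀ i, (∑ j, U i j * x j) ≤ v i})
    (h𝒳' : 𝒳' = {x | ∀ i, (∑ j, U i j * x j) ≤ v' i})
    (hne : 𝒳.Nonempty) (hne' : 𝒳'.Nonempty)
    (hLICQ : ∀ x ∈ 𝒳 ∪ 𝒳', ∀ I : Finset (Fin m),
      (∀ i ∈ I, (∑ j, U i j * x j) = v i ∨ (∑ j, U i j * x j) = v' i) →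
      ∀ w : Fin m → ℝ, (∀ i ∉ I, w i = 0) →
        ω ^ 2 * (∑ i, (w i) ^ 2) ≤ ∑ j, (∑ i, w i * U i j) ^ 2) :
    ∀ z : EuclideanSpace ℝ (Fin n),
      |Metric.infDist z 𝒳' - Metric.infDist z 𝒳| ≤
        (1 / ω) * Real.sqrt (∑ i, (v' i - v i) ^ 2) := by
  set u : Fin m → EuclideanSpace ℝ (Fin n) := fun i => WithLp.toLp 2 (U i)
  have hrows : ∀ b, polyhedron u b = {x | ∀ i, ∑ j, U i j * x j ≤ b i} := fun b => by
    simp only [polyhedron, u, inner_toLp_row]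
  rw [← hrows] at h𝒳 h𝒳'
  subst h𝒳 h𝒳'
  have hLICQ_u : ∀ y ∈ polyhedron u v ∪ polyhedron u v', ∀ μ : Fin m → ℝ,
      (∀ i, μ i ≠ 0 → ⟪u i, y⟫ = v i ∨ ⟪u i, y⟫ = v' i) →
        ω ^ 2 * ∑ i, μ i ^ 2 ≤ ‖∑ i, μ i • u i‖ ^ 2 := by
    intro y hy μ hμ
    rw [norm_sum_smul_toLp_row_sq]
    refine hLICQ y hy {i | μ i ≠ 0} (fun i hi => ?_) μ fun i hi => by simpa using hi
    simpa only [u, inner_toLp_row] using hμ i (Finset.mem_filter.1 hi).2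
  intro z
  rw [one_div]
  refine abs_infDist_sub_infDist_le_of_forall_exists_dist_le (by positivity)
    (fun x hx => ?_) (fun x hx => ?_) z
  · simp_rw [sub_sq_comm (v' _)]
    exact exists_mem_polyhedron_dist_le hω hne'
      (fun y hy μ hμ => hLICQ_u y (.inr hy) μ fun i hi => .inr (hμ i hi)) hx
  · exact exists_mem_polyhedron_dist_le hω hne
      (fun y hy μ hμ => hLICQ_u y (.inl hy) μ fun i hi => .inl (hμ i hi)) hx
end

section
/- Let f : ℝⁿ → ℝ be differentiable and α-strongly convex with a minimizer over each of two nonempty closed convex sets K₁, K₂; denote these minimizers x₁*, x₂*. If the Hausdorff distance between K₁ and K₂ is at most δ and ‖∇f‖ ≤ M on K₁ ∪ K₂, then ‖x₁* - x₂*‖² ≤ (2/α)(Mδ + Mδ) = (4Mδ)/α. -/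
open scoped RealInnerProductSpace

/-- Variational inequality: at a minimizer over a convex set, the gradient has
nonnegative inner product with every feasible direction. -/
lemma vi_aux {n : ℕ} {K : Set (EuclideanSpace ℝ (Fin n))} (hconv : Convex ℝ K)
    {f : EuclideanSpace ℝ (Fin n) → ℝ} {v x y : EuclideanSpace ℝ (Fin n)}
    (hg : HasGradientAt f v x) (hx : x ∈ K) (hmin : ∀ z ∈ K, f x ≤ f z)
    (hy : y ∈ K) : 0 ≤ ⟪v, y - x⟫ := by
  have hloc : IsLocalMinOn f K x :=
    eventually_nhdsWithin_of_forall fun z hz => hmin z hz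
  have htan : y - x ∈ posTangentConeAt K x :=
    sub_mem_posTangentConeAt_of_segment_subset (hconv.segment_subset hx hy)
  have hfd : HasFDerivWithinAt f (InnerProductSpace.toDual ℝ _ v) K x :=
    (hg.hasFDerivAt).hasFDerivWithinAt
  have := hloc.hasFDerivWithinAt_nonneg hfd htan
  simpa [InnerProductSpace.toDual_apply_apply] using this

/-- Stability of minimizers of a strongly convex function under perturbation of the
constraint set: if `f` is `α`-strongly convex with minimizers `x₁*, x₂*` over the
nonempty closed convex sets `K₁, K₂` whose Hausdorff distance is at most `δ`, and
`‖∇f‖ ≤ M` on `K₁ ∪ K₂`, then `‖x₁* - x₂*‖² ≤ 4Mδ/α`. -/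
theorem minimizer_stability_hausdorff
    {n : ℕ} (K₁ K₂ : Set (EuclideanSpace ℝ (Fin n)))
    (f : EuclideanSpace ℝ (Fin n) → ℝ)
    (g : EuclideanSpace ℝ (Fin n) → EuclideanSpace ℝ (Fin n))
    (x₁ x₂ : EuclideanSpace ℝ (Fin n))
    (α δ M : ℝ) (hα : 0 < α) (hδ : 0 ≤ δ) (hM : 0 ≤ M)
    (hK₁ : K₁.Nonempty) (hK₁c : IsClosed K₁) (hK₁conv : Convex ℝ K₁)
    (hK₂ : K₂.Nonempty) (hK₂c : IsClosed K₂) (hK₂conv : Convex ℝ K₂)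
    (hgrad : ∀ x, HasGradientAt f (g x) x)
    (hstrong : ∀ x y, f x + ⟪g x, y - x⟫ + (α / 2) * ‖y - x‖ ^ 2 ≤ f y)
    (hx₁ : x₁ ∈ K₁) (hmin₁ : ∀ y ∈ K₁, f x₁ ≤ f y)
    (hx₂ : x₂ ∈ K₂) (hmin₂ : ∀ y ∈ K₂, f x₂ ≤ f y)
    (hHaus₁ : ∀ x ∈ K₁, ∃ y ∈ K₂, ‖x - y‖ ≤ δ)
    (hHaus₂ : ∀ x ∈ K₂, ∃ y ∈ K₁, ‖x - y‖ ≤ δ)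
    (hgbound : ∀ x ∈ K₁ ∪ K₂, ‖g x‖ ≤ M) :
    ‖x₁ - x₂‖ ^ 2 ≤ 4 * M * δ / α := by
  obtain ⟨y₁, hy₁K, hy₁d⟩ := hHaus₂ x₂ hx₂
  obtain ⟨y₂, hy₂K, hy₂d⟩ := hHaus₁ x₁ hx₁
  -- f x₁ - f x₂ ≤ M * δ
  have hMδ : ∀ (a b : EuclideanSpace ℝ (Fin n)), a ∈ K₁ ∪ K₂ → ‖b - a‖ ≤ δ →
      -⟪g a, b - a⟫ ≤ M * δ := by
    intro a b ha hab
    calc -⟪g a, b - a⟫ ≤ ‖g a‖ * ‖b - a‖ := by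
          have := abs_real_inner_le_norm (g a) (b - a)
          have h2 := neg_abs_le (⟪g a, b - a⟫)
          linarith
      _ ≤ M * δ := mul_le_mul (hgbound a ha) hab (norm_nonneg _) hM
  have hf12 : f x₁ - f x₂ ≤ M * δ := by
    have h1 : f x₁ ≤ f y₁ := hmin₁ y₁ hy₁K
    have h2 := hstrong y₁ x₂
    have h3 : -⟪g y₁, x₂ - y₁⟫ ≤ M * δ := by
      exact hMδ y₁ x₂ (Or.inl hy₁K) hy₁d
    have h4 : 0 ≤ (α / 2) * ‖x₂ - y₁‖ ^ 2 := by positivity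
    linarith
  -- strong convexity at x₂ toward x₁
  have hsc := hstrong x₂ x₁
  -- bound -⟪g x₂, x₁ - x₂⟫
  have hvi : 0 ≤ ⟪g x₂, y₂ - x₂⟫ := vi_aux hK₂conv (hgrad x₂) hx₂ hmin₂ hy₂K
  have hsplit : ⟪g x₂, x₂ - x₁⟫ = ⟪g x₂, x₂ - y₂⟫ + ⟪g x₂, y₂ - x₁⟫ := by
    rw [← inner_add_right]
    congr 1
    abel
  have hterm2 : ⟪g x₂, y₂ - x₁⟫ ≤ M * δ := by
    have := abs_real_inner_le_norm (g x₂) (y₂ - x₁)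
    have hn : ‖y₂ - x₁‖ ≤ δ := by rwa [← norm_neg, neg_sub]
    have hb := hgbound x₂ (Or.inr hx₂)
    have h1 : ⟪g x₂, y₂ - x₁⟫ ≤ ‖g x₂‖ * ‖y₂ - x₁‖ := (le_abs_self _).trans this
    calc ⟪g x₂, y₂ - x₁⟫ ≤ ‖g x₂‖ * ‖y₂ - x₁‖ := h1
      _ ≤ M * δ := mul_le_mul hb hn (norm_nonneg _) hM
  have hterm1 : ⟪g x₂, x₂ - y₂⟫ ≤ 0 := by
    have : ⟪g x₂, x₂ - y₂⟫ = -⟪g x₂, y₂ - x₂⟫ := by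
      rw [← inner_neg_right]; congr 1; abel
    linarith [hvi, this.ge, this.le]
  have hneg : -⟪g x₂, x₁ - x₂⟫ ≤ M * δ := by
    have : -⟪g x₂, x₁ - x₂⟫ = ⟪g x₂, x₂ - x₁⟫ := by
      rw [← inner_neg_right]; congr 1; abel
    rw [this, hsplit]
    linarith
  have hd : (α / 2) * ‖x₁ - x₂‖ ^ 2 ≤ 2 * (M * δ) := by linarith
  rw [le_div_iff₀ hα]
  nlinarith [hd]
end
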